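/- arXiv:2106.00336 — 2 statements merged into one kernel-verified Lean document; each statement's English description precedes it below -/
import Mathlib

section
/- Let N be a Novikov algebra and θ a left-symmetric 2-cocycle on N with values in ℂ. Then the central extension N_θ is a Novikov algebra if and only if θ(xy, z) = θ(xz, y) for all x, y, z ∈ N. -/
/-- The central extension product on `N ⊕ ℂ` given by a cocycle `θ`. -/
def extMul {N : Type*} [AddCommGroup N] [Module ℂ N]
    (mul : N →ₗ[ℂ] N →ₗ[ℂ] N) (θ : N →ₗ[ℂ] N →ₗ[ℂ] ℂ) (p q : N × ℂ) : N × ℂ :=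
  (mul p.1 q.1, θ p.1 q.1)

section

variable {N : Type*} [AddCommGroup N] [Module ℂ N]
  (mul : N →ₗ[ℂ] N →ₗ[ℂ] N) (θ : N →ₗ[ℂ] N →ₗ[ℂ] ℂ)

theorem extMul_extMul (p q r : N × ℂ) :
    extMul mul θ (extMul mul θ p q) r = (mul (mul p.1 q.1) r.1, θ (mul p.1 q.1) r.1) :=
  rfl

theorem extMul_right_comm_iff :
    (∀ p q r : N × ℂ,
        extMul mul θ (extMul mul θ p q) r = extMul mul θ (extMul mul θ p r) q) ↔
    (∀ x y z : N, mul (mul x y) z = mul (mul x z) y) ∧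
      (∀ x y z : N, θ (mul x y) z = θ (mul x z) y) := by
  simp only [extMul_extMul, Prod.ext_iff]
  constructor
  · intro h
    exact ⟨fun x y z ↦ (h (x, 0) (y, 0) (z, 0)).1, fun x y z ↦ (h (x, 0) (y, 0) (z, 0)).2⟩
  · rintro ⟨hmul, hθ⟩ p q r
    exact ⟨hmul p.1 q.1 r.1, hθ p.1 q.1 r.1⟩

end

theorem central_extension_novikov_iff_general
    {N : Type*} [AddCommGroup N] [Module ℂ N]
    (mul : N →ₗ[ℂ] N →ₗ[ℂ] N)
    (hNov : ∀ x y z : N, mul (mul x y) z = mul (mul x z) y)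
    (θ : N →ₗ[ℂ] N →ₗ[ℂ] ℂ) :
    (∀ p q r : N × ℂ,
        extMul mul θ (extMul mul θ p q) r = extMul mul θ (extMul mul θ p r) q) ↔
    (∀ x y z : N, θ (mul x y) z = θ (mul x z) y) := by
  rw [extMul_right_comm_iff]
  exact and_iff_right hNov

/-- For a Novikov algebra `N` and a left-symmetric 2-cocycle `θ`
with values in `ℂ`, the central extension `N_θ` is a Novikov algebra if and only
if `θ(xy, z) = θ(xz, y)` for all `x, y, z ∈ N`. -/
theorem central_extension_novikov_iff
    {N : Type*} [AddCommGroup N] [Module ℂ N]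
    (mul : N →ₗ[ℂ] N →ₗ[ℂ] N)
    (hLS : ∀ x y z : N,
      mul (mul x y) z - mul x (mul y z) = mul (mul y x) z - mul y (mul x z))
    (hNov : ∀ x y z : N, mul (mul x y) z = mul (mul x z) y)
    (θ : N →ₗ[ℂ] N →ₗ[ℂ] ℂ)
    (hθ : ∀ x y z : N,
      θ (mul x y) z - θ x (mul y z) = θ (mul y x) z - θ y (mul x z)) :
    (∀ p q r : N × ℂ,
        extMul mul θ (extMul mul θ p q) r = extMul mul θ (extMul mul θ p r) q) ↔
    (∀ x y z : N, θ (mul x y) z = θ (mul x z) y) :=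
  central_extension_novikov_iff_general mul hNov θ
end

section
/- The automorphism group of the 2-dimensional complex algebra L²*₀₁ with basis e₁,e₂ and only nonzero product e₁e₁ = e₂ consists exactly of the linear maps φ given by φ(e₁) = x e₁ + y e₂, φ(e₂) = x² e₂ with x ≠ 0, y ∈ ℂ. -/
/-- Multiplication of the algebra `L²*₀₁`: on the basis `e₁, e₂` (indexed
`0,1`) the only nonzero product is `e₁e₁ = e₂`. -/
def mulL201 (x y : Fin 2 → ℂ) : Fin 2 → ℂ :=
  ![0, x 0 * y 0]

def e (i : Fin 2) : Fin 2 → ℂ := Pi.single i 1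

lemma eq_smul_e_zero_add_smul_e_one (v : Fin 2 → ℂ) : v = v 0 • e 0 + v 1 • e 1 := by
  ext i
  fin_cases i <;> simp [e]

lemma mulL201_eq_smul_e_one (a b : Fin 2 → ℂ) : mulL201 a b = (a 0 * b 0) • e 1 := by
  ext i
  fin_cases i <;> simp [mulL201, e]

/-- Every product is a multiple of `e 1`, so the condition is already decided by `e 0 * e 0`. -/
lemma map_mulL201_iff (f : (Fin 2 → ℂ) →ₗ[ℂ] (Fin 2 → ℂ)) :
    (∀ a b, f (mulL201 a b) = mulL201 (f a) (f b)) ↔ f (e 1) = f (e 0) 0 ^ 2 • e 1 := by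
  simp only [mulL201_eq_smul_e_one, map_smul]
  constructor
  · intro h
    simpa [e, sq] using h (e 0) (e 0)
  · intro h a b
    have hf (v : Fin 2 → ℂ) : f v 0 = v 0 * f (e 0) 0 := by
      conv_lhs => rw [eq_smul_e_zero_add_smul_e_one v]
      rw [map_add, map_smul, map_smul, h]
      simp [e]
    rw [h, hf a, hf b, smul_smul]
    congr 1
    ring

/-- the automorphism group of `L²*₀₁` consists exactly of the
invertible linear maps `φ` with `φ(e₁) = x e₁ + y e₂`, `φ(e₂) = x² e₂`,
`x ≠ 0`, `y ∈ ℂ`. -/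
theorem L201_automorphisms (φ : (Fin 2 → ℂ) ≃ₗ[ℂ] (Fin 2 → ℂ)) :
    (∀ a b : Fin 2 → ℂ, φ (mulL201 a b) = mulL201 (φ a) (φ b)) ↔
    (∃ x y : ℂ, x ≠ 0 ∧ φ (e 0) = x • e 0 + y • e 1 ∧ φ (e 1) = x ^ 2 • e 1) := by
  refine (map_mulL201_iff φ.toLinearMap).trans ⟨fun h => ?_, ?_⟩
  · refine ⟨φ (e 0) 0, φ (e 0) 1, fun hx => ?_, eq_smul_e_zero_add_smul_e_one _, h⟩
    have hφe1 : φ (e 1) = 0 := by simpa [hx] using h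
    simpa [e] using congrFun (φ.map_eq_zero_iff.mp hφe1) 1
  · rintro ⟨x, y, -, h0, h1⟩
    rw [LinearEquiv.coe_coe, h1, h0]
    simp [e]
end
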